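/- Let T be a numerical semigroup with α-rectangular Apéry set, and let d_1, d_2 be coprime positive integers with d_1 ∈ T not a minimal generator of T, d_1 ∉ Ap(T, m(T)), d_2 > 1, and d_1 > d_2·m(T). Then the gluing S = d_2·T + d_1·ℕ has α-rectangular Apéry set. -/

import Mathlib

/-- A numerical semigroup: a subset of ℕ containing 0, closed under addition,
with finite complement. -/
structure NumSgp where
  carrier : Set ℕ
  zero_mem : 0 ∈ carrier
  add_mem : ∀ a ∈ carrier, ∀ b ∈ carrier, a + b ∈ carrier
  cofinite : Set.Finite carrierᶜ

namespace NumSgp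

/-- The multiplicity: the smallest positive element. -/
noncomputable def mult (S : NumSgp) : ℕ := sInf {s | s ∈ S.carrier ∧ s ≠ 0}

/-- The Apéry set of `S` with respect to `n`: elements `s ∈ S` with `s - n ∉ S`. -/
def Apery (S : NumSgp) (n : ℕ) : Set ℕ :=
  {s | s ∈ S.carrier ∧ ¬ ∃ t ∈ S.carrier, s = t + n}

/-- `s ⪯ t` : there is `u ∈ S` with `t = s + u`. -/
def sle (S : NumSgp) (s t : ℕ) : Prop := ∃ u ∈ S.carrier, t = s + u

/-- Membership for integers. -/
def memZ (S : NumSgp) (x : ℤ) : Prop := ∃ n ∈ S.carrier, (n : ℤ) = x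

/-- `f` is the Frobenius number of `S`: the largest integer not in `S`. -/
def IsFrob (S : NumSgp) (f : ℤ) : Prop := ¬ S.memZ f ∧ ∀ x : ℤ, f < x → S.memZ x

/-- `S` is symmetric: `x ∈ S ↔ f - x ∉ S` for all integers `x`. -/
def Symm (S : NumSgp) : Prop :=
  ∃ f : ℤ, S.IsFrob f ∧ ∀ x : ℤ, S.memZ x ↔ ¬ S.memZ (f - x)

/-- `s` is a minimal generator (irreducible element) of `S`. -/
def IsMinGen (S : NumSgp) (s : ℕ) : Prop :=
  s ∈ S.carrier ∧ s ≠ 0 ∧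
    ¬ ∃ a ∈ S.carrier, ∃ b ∈ S.carrier, a ≠ 0 ∧ b ≠ 0 ∧ s = a + b

/-- `g : Fin ν → ℕ` enumerates the minimal generators in increasing order. -/
def MinGens (S : NumSgp) {ν : ℕ} (g : Fin ν → ℕ) : Prop :=
  StrictMono g ∧ Set.range g = {s | S.IsMinGen s}

/-- The order of `s`: the maximal total coefficient sum over representations of `s`
in terms of the generators `g`. -/
noncomputable def ord {ν : ℕ} (g : Fin ν → ℕ) (s : ℕ) : ℕ :=
  sSup {k | ∃ lam : Fin ν → ℕ, s = ∑ i, lam i * g i ∧ k = ∑ i, lam i}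

/-- `s` has a unique representation in terms of the generators `g`. -/
def UniqueRep {ν : ℕ} (g : Fin ν → ℕ) (s : ℕ) : Prop :=
  ∃! lam : Fin ν → ℕ, s = ∑ i, lam i * g i

/-- `s` has a unique maximal representation in terms of the generators `g`. -/
def UniqueMaxRep {ν : ℕ} (g : Fin ν → ℕ) (s : ℕ) : Prop :=
  ∃! lam : Fin ν → ℕ, s = ∑ i, lam i * g i ∧ ∑ i, lam i = ord g s

/-- The submonoid of ℕ generated by the generators `g j` with `j < i`. -/
def genBy {ν : ℕ} (g : Fin ν → ℕ) (i : Fin ν) : Set ℕ :=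
  {s | ∃ lam : Fin ν → ℕ, (∀ j, ¬ j < i → lam j = 0) ∧ s = ∑ j, lam j * g j}

/-- `τ_i = min {h | h·g_i ∈ ⟨g_1, …, g_{i-1}⟩} - 1`. -/
noncomputable def tau {ν : ℕ} (g : Fin ν → ℕ) (i : Fin ν) : ℕ :=
  sInf {h | h * g i ∈ genBy g i} - 1

/-- `α_i = max {h | h·g_i ∈ Ap(S, m)}`. -/
noncomputable def alpha (S : NumSgp) {ν : ℕ} (g : Fin ν → ℕ) (i : Fin ν) : ℕ :=
  sSup {h | h * g i ∈ S.Apery S.mult}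

/-- `β_i = max {h | h·g_i ∈ Ap(S, m) and ord(h·g_i) = h}`. -/
noncomputable def beta (S : NumSgp) {ν : ℕ} (g : Fin ν → ℕ) (i : Fin ν) : ℕ :=
  sSup {h | h * g i ∈ S.Apery S.mult ∧ ord g (h * g i) = h}

/-- `γ_i`. -/
noncomputable def gamma (S : NumSgp) {ν : ℕ} (g : Fin ν → ℕ) (i : Fin ν) : ℕ :=
  sSup {h | h * g i ∈ S.Apery S.mult ∧ ord g (h * g i) = h ∧ UniqueMaxRep g (h * g i)}

/-- The "rectangle" `{Σ_{i ≥ 2} λ_i g_i | 0 ≤ λ_i ≤ c_i}` (indices here start at 0,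
the first generator does not appear). -/
def rect {ν : ℕ} (g c : Fin ν → ℕ) : Set ℕ :=
  {s | ∃ lam : Fin ν → ℕ, (∀ i, i.val = 0 → lam i = 0) ∧ (∀ i, lam i ≤ c i) ∧
    s = ∑ i, lam i * g i}

/-- `Π_{i ≥ 2} (c_i + 1)` (the first index excluded). -/
def piProd {ν : ℕ} (c : Fin ν → ℕ) : ℕ :=
  ∏ i ∈ Finset.univ.filter (fun i : Fin ν => i.val ≠ 0), (c i + 1)

/-- `S` is telescopic. -/
def Telescopic (S : NumSgp) : Prop :=
  ∃ (ν : ℕ) (g : Fin ν → ℕ), S.MinGens g ∧ S.Apery S.mult = rect g (tau g)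

/-- `S` has α-rectangular Apéry set. -/
def AlphaRect (S : NumSgp) : Prop :=
  ∃ (ν : ℕ) (g : Fin ν → ℕ), S.MinGens g ∧ S.Apery S.mult = rect g (S.alpha g)

/-- `S` has γ-rectangular Apéry set. -/
def GammaRect (S : NumSgp) : Prop :=
  ∃ (ν : ℕ) (g : Fin ν → ℕ), S.MinGens g ∧ S.Apery S.mult = rect g (S.gamma g)

/-- `S` is associated to a plane branch: telescopic and `(τ_i+1) g_i < g_{i+1}`. -/
def PlaneBranch (S : NumSgp) : Prop :=
  ∃ (ν : ℕ) (g : Fin ν → ℕ), S.MinGens g ∧ S.Apery S.mult = rect g (tau g) ∧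
    ∀ i : Fin ν, 1 ≤ i.val → ∀ h : i.val + 1 < ν, (tau g i + 1) * g i < g ⟨i.val + 1, h⟩

/-- `S` is free: for some rearrangement `n` of the minimal generators,
`Ap(S, n_1) = {Σ_{i ≥ 2} λ_i n_i | 0 ≤ λ_i ≤ φ_i}`. -/
def Free (S : NumSgp) : Prop :=
  ∃ (ν : ℕ) (hν : 0 < ν) (n : Fin ν → ℕ), Function.Injective n ∧
    Set.range n = {s | S.IsMinGen s} ∧ S.Apery (n ⟨0, hν⟩) = rect n (tau n)

/-- The kernel congruence of the factorization map `λ ↦ Σ λ_i g_i`. -/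
def kerCon {ν : ℕ} (g : Fin ν → ℕ) : AddCon (Fin ν → ℕ) where
  r a b := ∑ i, a i * g i = ∑ i, b i * g i
  iseqv := ⟨fun _ => rfl, Eq.symm, Eq.trans⟩
  add' := by
    intro a b c d h1 h2
    simp only [Pi.add_apply, add_mul, Finset.sum_add_distrib]
    exact congrArg₂ (· + ·) h1 h2

/-- `S` is a complete intersection: it admits a presentation of cardinality `ν - 1`
(the cardinality of any minimal presentation equals `ν - 1`). -/
def CompleteIntersection (S : NumSgp) : Prop :=
  ∃ (ν : ℕ) (g : Fin ν → ℕ), S.MinGens g ∧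
    ∃ ρ : Finset ((Fin ν → ℕ) × (Fin ν → ℕ)), ρ.card = ν - 1 ∧
      addConGen (fun a b => (a, b) ∈ ρ) = kerCon g

end NumSgp

/-!
Every element of `S = d₂·T + d₁·ℕ` is uniquely `d₂·u + d₁·j` with `u ∈ T` and `j < d₂`, by
coprimality. As `d₁ > d₂·m(T)`, the multiplicity of `S` is `d₂·m(T)`, and then
`Ap(S, m(S)) = d₂·Ap(T, m(T)) + d₁·{0, …, d₂ - 1}`. The minimal generators of `S` are the
`d₂·gᵢ` together with `d₁`; the first have the same `α` as `gᵢ` in `T`, and `d₁` has `α = d₂ - 1`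
because `d₂·d₁ = d₂·(d₁ - m(T)) + d₂·m(T)`. So `Ap(S, m(S))` is the rectangle of `T`, scaled by
`d₂`, with one more side `{0, …, d₂ - 1}·d₁`; sorting the generators only permutes the sides.
-/

lemma Nat.eq_and_eq_of_mul_add_mul_eq {a b u u' j j' : ℕ} (hab : Nat.Coprime a b)
    (hj : j < b) (hj' : j' < b) (h : b * u + a * j = b * u' + a * j') : u = u' ∧ j = j' := by
  have hmod : a * j ≡ a * j' [MOD b] := by
    simpa [Nat.ModEq, Nat.mul_add_mod] using congrArg (· % b) h
  have hjj : j = j' := (hmod.cancel_left_of_coprime hab.symm).eq_of_lt_of_lt hj hj'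
  subst hjj
  have : b * u = b * u' := by omega
  exact ⟨Nat.eq_of_mul_eq_mul_left (by omega) this, rfl⟩

lemma Tuple.sort_apply_zero_of_le {n : ℕ} {α : Type*} [LinearOrder α] {h : Fin (n + 1) → α} (hinj : h.Injective)
    (hmin : ∀ i, h 0 ≤ h i) : Tuple.sort h 0 = 0 := by
  have := Tuple.monotone_sort h (Fin.zero_le ((Tuple.sort h).symm 0))
  simp only [Function.comp_apply, Equiv.apply_symm_apply] at this
  exact hinj (le_antisymm this (hmin _))

namespace NumSgp

variable {S T : NumSgp}

lemma carrier_infinite (S : NumSgp) : S.carrier.Infinite := by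
  simpa using S.cofinite.infinite_compl

lemma mult_mem_and_ne_zero (S : NumSgp) : S.mult ∈ S.carrier ∧ S.mult ≠ 0 := by
  obtain ⟨x, hx, hx0⟩ := S.carrier_infinite.exists_gt 0
  exact Nat.sInf_mem (s := {s | s ∈ S.carrier ∧ s ≠ 0}) ⟨x, hx, hx0.ne'⟩

lemma mult_le {s : ℕ} (hs : s ∈ S.carrier) (hs0 : s ≠ 0) : S.mult ≤ s :=
  Nat.sInf_le ⟨hs, hs0⟩

lemma mul_mem {t : ℕ} (ht : t ∈ S.carrier) (k : ℕ) : k * t ∈ S.carrier := by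
  induction k with
  | zero => simpa using S.zero_mem
  | succ k ih => rw [Nat.succ_mul]; exact S.add_mem _ ih _ ht

lemma IsMinGen.eq_zero_or_eq_zero {s a b : ℕ} (hs : S.IsMinGen s) (ha : a ∈ S.carrier)
    (hb : b ∈ S.carrier) (hab : s = a + b) : a = 0 ∨ b = 0 := by
  by_contra! h
  exact hs.2.2 ⟨a, ha, b, hb, h.1, h.2, hab⟩

lemma isMinGen_mult (S : NumSgp) : S.IsMinGen S.mult := by
  obtain ⟨hm, hm0⟩ := S.mult_mem_and_ne_zero
  refine ⟨hm, hm0, ?_⟩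
  rintro ⟨a, ha, b, hb, ha0, hb0, hab⟩
  have := S.mult_le ha ha0
  have := S.mult_le hb hb0
  omega

lemma MinGens.pos {ν : ℕ} {g : Fin ν → ℕ} (hg : S.MinGens g) : 0 < ν := by
  obtain ⟨i, -⟩ : S.mult ∈ Set.range g := hg.2 ▸ S.isMinGen_mult
  exact i.pos

lemma MinGens.apply_zero {n : ℕ} {g : Fin (n + 1) → ℕ} (hg : S.MinGens g) : g 0 = S.mult := by
  obtain ⟨i, hi⟩ : S.mult ∈ Set.range g := hg.2 ▸ S.isMinGen_mult
  have hg0 : S.IsMinGen (g 0) := hg.2.le (Set.mem_range_self 0)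
  have := hg.1.monotone (Fin.zero_le i)
  have := S.mult_le hg0.1 hg0.2.1
  omega

lemma rect_subset_rect_comp_perm {n : ℕ} (g c : Fin (n + 1) → ℕ) {σ : Equiv.Perm (Fin (n + 1))}
    (hσ : σ 0 = 0) : rect g c ⊆ rect (g ∘ σ) (c ∘ σ) := by
  rintro _ ⟨lam, hlam0, hlamc, rfl⟩
  refine ⟨lam ∘ σ, fun i hi => ?_, fun i => hlamc (σ i), ?_⟩
  · obtain rfl : i = 0 := Fin.ext hi
    exact hlam0 _ (by simp [hσ])
  · exact (Equiv.sum_comp σ (fun i => lam i * g i)).symm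

lemma rect_comp_perm {n : ℕ} (g c : Fin (n + 1) → ℕ) {σ : Equiv.Perm (Fin (n + 1))}
    (hσ : σ 0 = 0) : rect (g ∘ σ) (c ∘ σ) = rect g c := by
  refine subset_antisymm ?_ (rect_subset_rect_comp_perm g c hσ)
  have hσ' : σ.symm 0 = 0 := by rw [Equiv.symm_apply_eq, hσ]
  simpa [Function.comp_assoc] using rect_subset_rect_comp_perm (g ∘ σ) (c ∘ σ) hσ'

lemma rect_snoc {n : ℕ} (g c : Fin (n + 1) → ℕ) (a b : ℕ) :
    rect (Fin.snoc g a : Fin (n + 2) → ℕ) (Fin.snoc c b) =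
      {x | ∃ y ∈ rect g c, ∃ j ≤ b, x = y + j * a} := by
  ext x
  constructor
  · rintro ⟨lam, hlam0, hlamc, rfl⟩
    refine ⟨∑ i, lam i.castSucc * g i, ⟨lam ∘ Fin.castSucc, fun i hi => hlam0 _ hi,
      fun i => by simpa using hlamc i.castSucc, rfl⟩, lam (Fin.last _), ?_, ?_⟩
    · simpa using hlamc (Fin.last _)
    · simp [Fin.sum_univ_castSucc]
  · rintro ⟨_, ⟨lam, hlam0, hlamc, rfl⟩, j, hj, rfl⟩
    refine ⟨Fin.snoc lam j, fun i => ?_, fun i => ?_, by simp [Fin.sum_univ_castSucc]⟩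
    · refine Fin.lastCases (by simp) (fun i hi => ?_) i
      simpa using hlam0 i hi
    · exact Fin.lastCases (by simpa using hj) (fun i => by simpa using hlamc i) i

lemma rect_mul_left {ν : ℕ} (d : ℕ) (g c : Fin ν → ℕ) :
    rect (fun i => d * g i) c = (d * ·) '' rect g c := by
  ext x
  constructor
  · rintro ⟨lam, hlam0, hlamc, rfl⟩
    exact ⟨_, ⟨lam, hlam0, hlamc, rfl⟩, by simp only [Finset.mul_sum]; ring_nf⟩
  · rintro ⟨_, ⟨lam, hlam0, hlamc, rfl⟩, rfl⟩
    exact ⟨lam, hlam0, hlamc, by simp only [Finset.mul_sum]; ring_nf⟩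

def gluing (T : NumSgp) (d₁ d₂ : ℕ) : Set ℕ := {s | ∃ t ∈ T.carrier, ∃ k : ℕ, s = d₂ * t + d₁ * k}

section Gluing

variable {d₁ d₂ : ℕ}

lemma mul_add_mul_mem_gluing (hS : S.carrier = gluing T d₁ d₂) {t : ℕ} (ht : t ∈ T.carrier)
    (k : ℕ) : d₂ * t + d₁ * k ∈ S.carrier :=
  hS ▸ ⟨t, ht, k, rfl⟩

lemma exists_eq_mul_of_mem_gluing_of_lt (hS : S.carrier = gluing T d₁ d₂) {x : ℕ}
    (hx : x ∈ S.carrier) (hxd₁ : x < d₁) : ∃ t ∈ T.carrier, x = d₂ * t := by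
  obtain ⟨t, ht, k, rfl⟩ : x ∈ gluing T d₁ d₂ := hS ▸ hx
  obtain rfl : k = 0 := by
    by_contra hk
    have := Nat.le_mul_of_pos_right d₁ (Nat.pos_of_ne_zero hk)
    omega
  exact ⟨t, ht, by simp⟩

/-- Trade `d₂` copies of `d₁` for `d₂·d₁ ∈ d₂·T`. -/
lemma exists_mul_add_mul_of_mem_gluing (hS : S.carrier = gluing T d₁ d₂) (hd₁T : d₁ ∈ T.carrier)
    (hd₂ : 0 < d₂) {x : ℕ} (hx : x ∈ S.carrier) :
    ∃ u ∈ T.carrier, ∃ j < d₂, x = d₂ * u + d₁ * j := by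
  obtain ⟨t, ht, k, rfl⟩ : x ∈ gluing T d₁ d₂ := hS ▸ hx
  refine ⟨t + k / d₂ * d₁, T.add_mem _ ht _ (T.mul_mem hd₁T _), k % d₂, Nat.mod_lt _ hd₂, ?_⟩
  conv_lhs => rw [← Nat.div_add_mod k d₂]
  ring

lemma mult_gluing (hS : S.carrier = gluing T d₁ d₂) (hd₂ : 0 < d₂) (hlt : d₂ * T.mult < d₁) :
    S.mult = d₂ * T.mult := by
  obtain ⟨hmT, hm0⟩ := T.mult_mem_and_ne_zero
  obtain ⟨hmS, hmS0⟩ := S.mult_mem_and_ne_zero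
  refine le_antisymm (S.mult_le (by simpa using mul_add_mul_mem_gluing hS hmT 0)
    (Nat.mul_ne_zero hd₂.ne' hm0)) ?_
  by_contra! hlt'
  obtain ⟨t, ht, hst⟩ := exists_eq_mul_of_mem_gluing_of_lt hS hmS (by omega)
  have ht0 : t ≠ 0 := by rintro rfl; simp_all
  have := Nat.mul_le_mul_left d₂ (T.mult_le ht ht0)
  omega

lemma apery_gluing (hS : S.carrier = gluing T d₁ d₂) (hcop : Nat.Coprime d₁ d₂)
    (hd₁T : d₁ ∈ T.carrier) (hd₂ : 0 < d₂) (n : ℕ) :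
    S.Apery (d₂ * n) = {x | ∃ w ∈ T.Apery n, ∃ j < d₂, x = d₂ * w + d₁ * j} := by
  ext x
  constructor
  · rintro ⟨hx, hxAp⟩
    obtain ⟨u, hu, j, hj, rfl⟩ := exists_mul_add_mul_of_mem_gluing hS hd₁T hd₂ hx
    refine ⟨u, ⟨hu, ?_⟩, j, hj, rfl⟩
    rintro ⟨v, hv, rfl⟩
    exact hxAp ⟨d₂ * v + d₁ * j, mul_add_mul_mem_gluing hS hv j, by ring⟩
  · rintro ⟨w, ⟨hw, hwAp⟩, j, hj, rfl⟩
    refine ⟨mul_add_mul_mem_gluing hS hw j, ?_⟩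
    rintro ⟨s, hs, hseq⟩
    obtain ⟨u, hu, j', hj', rfl⟩ := exists_mul_add_mul_of_mem_gluing hS hd₁T hd₂ hs
    have := Nat.eq_and_eq_of_mul_add_mul_eq hcop hj hj'
      (show d₂ * w + d₁ * j = d₂ * (u + n) + d₁ * j' by rw [hseq]; ring)
    exact hwAp ⟨u, hu, this.1⟩

lemma isMinGen_gluing_of_not_dvd (hS : S.carrier = gluing T d₁ d₂) (hndvd : ¬ d₂ ∣ d₁) :
    S.IsMinGen d₁ := by
  refine ⟨by simpa using mul_add_mul_mem_gluing hS T.zero_mem 1,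
    fun h => hndvd (h ▸ dvd_zero d₂), ?_⟩
  rintro ⟨a, ha, b, hb, ha0, hb0, hab⟩
  obtain ⟨ta, -, rfl⟩ := exists_eq_mul_of_mem_gluing_of_lt hS ha (by omega)
  obtain ⟨tb, -, rfl⟩ := exists_eq_mul_of_mem_gluing_of_lt hS hb (by omega)
  exact hndvd ⟨ta + tb, by rw [hab, mul_add]⟩

/-- Writing `a = d₂·a' + d₁·k` and `b = d₂·b' + d₁·l`, coprimality forces `d₂ ∣ k + l`, so
`t = a' + b' + c·d₁` in `T`. -/
lemma isMinGen_gluing_mul (hS : S.carrier = gluing T d₁ d₂) (hcop : Nat.Coprime d₁ d₂)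
    (hd₁T : d₁ ∈ T.carrier) (hd₁gen : ¬ T.IsMinGen d₁) (hd₂ : 0 < d₂) {t : ℕ}
    (ht : T.IsMinGen t) : S.IsMinGen (d₂ * t) := by
  refine ⟨by simpa using mul_add_mul_mem_gluing hS ht.1 0, Nat.mul_ne_zero hd₂.ne' ht.2.1, ?_⟩
  rintro ⟨a, ha, b, hb, ha0, hb0, hab⟩
  obtain ⟨ta, hta, ka, rfl⟩ : a ∈ gluing T d₁ d₂ := hS ▸ ha
  obtain ⟨tb, htb, kb, rfl⟩ : b ∈ gluing T d₁ d₂ := hS ▸ hb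
  have hsum : d₂ * t = d₂ * (ta + tb) + d₁ * (ka + kb) := by rw [hab]; ring
  obtain ⟨c, hc⟩ : d₂ ∣ ka + kb := hcop.symm.dvd_of_dvd_mul_left <|
    (Nat.dvd_add_right (dvd_mul_right d₂ (ta + tb))).mp (hsum ▸ dvd_mul_right d₂ t)
  have htc : t = ta + tb + c * d₁ := Nat.eq_of_mul_eq_mul_left hd₂ (by rw [hsum, hc]; ring)
  rcases Nat.eq_zero_or_pos (c * d₁) with hcd | hcd
  · have hk : d₁ * ka + d₁ * kb = 0 := by
      rw [← mul_add, hc, show d₁ * (d₂ * c) = d₂ * (c * d₁) by ring, hcd, mul_zero]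
    rcases ht.eq_zero_or_eq_zero hta htb (by omega) with rfl | rfl
    · exact ha0 (by omega)
    · exact hb0 (by omega)
  · obtain ⟨c, rfl⟩ : ∃ c', c = c' + 1 :=
      Nat.exists_eq_add_one.mpr (Nat.pos_of_ne_zero (by rintro rfl; simp at hcd))
    have hrest : ta + tb + c * d₁ ∈ T.carrier :=
      T.add_mem _ (T.add_mem _ hta _ htb) _ (T.mul_mem hd₁T _)
    rcases ht.eq_zero_or_eq_zero hrest hd₁T (by rw [htc]; ring) with h0 | h0
    · exact hd₁gen (by rwa [htc, add_mul, one_mul, ← add_assoc, h0, zero_add] at ht)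
    · simp [h0] at hcd

lemma IsMinGen.of_gluing (hS : S.carrier = gluing T d₁ d₂) (hd₂ : 0 < d₂) {s : ℕ}
    (hs : S.IsMinGen s) : s = d₁ ∨ ∃ t, T.IsMinGen t ∧ d₂ * t = s := by
  obtain ⟨t, ht, k, rfl⟩ : s ∈ gluing T d₁ d₂ := hS ▸ hs.1
  rcases hs.eq_zero_or_eq_zero (by simpa using mul_add_mul_mem_gluing hS ht 0)
    (by simpa using mul_add_mul_mem_gluing hS T.zero_mem k) rfl with h0 | h0
  · left
    obtain ⟨k, rfl⟩ : ∃ k', k = k' + 1 := Nat.exists_eq_add_one.mpr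
      (Nat.pos_of_ne_zero fun hk => hs.2.1 (by simp [h0, hk]))
    rcases hs.eq_zero_or_eq_zero (by simpa using mul_add_mul_mem_gluing hS T.zero_mem 1)
      (by simpa using mul_add_mul_mem_gluing hS T.zero_mem k)
      (show _ = d₁ + d₁ * k by rw [h0]; ring) with h1 | h1
    · exact absurd (by simp [h0, h1]) hs.2.1
    · simp [h0, h1, mul_add]
  · right
    refine ⟨t, ⟨ht, fun h => hs.2.1 (by simp [h, h0]), ?_⟩, by simp [h0]⟩
    rintro ⟨a, ha, b, hb, ha0, hb0, rfl⟩
    rcases hs.eq_zero_or_eq_zero (by simpa using mul_add_mul_mem_gluing hS ha 0)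
      (by simpa using mul_add_mul_mem_gluing hS hb 0) (by rw [h0]; ring) with h | h <;>
    simp_all

lemma setOf_isMinGen_gluing (hS : S.carrier = gluing T d₁ d₂) (hcop : Nat.Coprime d₁ d₂)
    (hd₁T : d₁ ∈ T.carrier) (hd₁gen : ¬ T.IsMinGen d₁) (hndvd : ¬ d₂ ∣ d₁) (hd₂ : 0 < d₂) :
    {s | S.IsMinGen s} = insert d₁ ((d₂ * ·) '' {t | T.IsMinGen t}) := by
  ext s
  constructor
  · exact fun hs => hs.of_gluing hS hd₂
  · rintro (rfl | ⟨t, ht, rfl⟩)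
    · exact isMinGen_gluing_of_not_dvd hS hndvd
    · exact isMinGen_gluing_mul hS hcop hd₁T hd₁gen hd₂ ht

lemma setOf_mul_mem_apery_gluing_mul (hS : S.carrier = gluing T d₁ d₂)
    (hcop : Nat.Coprime d₁ d₂) (hd₁T : d₁ ∈ T.carrier) (hd₂ : 0 < d₂) (t n : ℕ) :
    {k | k * (d₂ * t) ∈ S.Apery (d₂ * n)} = {k | k * t ∈ T.Apery n} := by
  ext k
  rw [apery_gluing hS hcop hd₁T hd₂]
  constructor
  · rintro ⟨w, hw, j, hj, he⟩
    have := Nat.eq_and_eq_of_mul_add_mul_eq hcop hj hd₂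
      (show d₂ * w + d₁ * j = d₂ * (k * t) + d₁ * 0 by rw [← he]; ring)
    exact (show k * t ∈ T.Apery n by rwa [← this.1])
  · exact fun hk => ⟨k * t, hk, 0, hd₂, by ring⟩

/-- Once `k ≥ d₂`, the `T`-part of `k·d₁` is a positive multiple of `d₁`, which lies outside
`Ap(T, n)` together with `d₁`. -/
lemma setOf_mul_mem_apery_gluing_eq_Iio (hS : S.carrier = gluing T d₁ d₂)
    (hcop : Nat.Coprime d₁ d₂) (hd₁T : d₁ ∈ T.carrier) (hd₂ : 0 < d₂) {n : ℕ} (hn : n ≠ 0)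
    (hd₁Ap : d₁ ∉ T.Apery n) : {k | k * d₁ ∈ S.Apery (d₂ * n)} = Set.Iio d₂ := by
  ext k
  rw [apery_gluing hS hcop hd₁T hd₂]
  constructor
  · rintro ⟨w, hw, j, hj, he⟩
    rw [Set.mem_Iio]
    by_contra! hk
    obtain ⟨t, ht, hd₁⟩ : ∃ t ∈ T.carrier, d₁ = t + n := by
      by_contra h
      exact hd₁Ap ⟨hd₁T, h⟩
    have := Nat.eq_and_eq_of_mul_add_mul_eq hcop hj (Nat.mod_lt k hd₂)
      (show d₂ * w + d₁ * j = d₂ * (k / d₂ * d₁) + d₁ * (k % d₂) by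
        rw [← he]; conv_lhs => rw [← Nat.div_add_mod k d₂]
        ring)
    obtain ⟨q, hq⟩ : ∃ q, k / d₂ = q + 1 :=
      Nat.exists_eq_add_one.mpr ((Nat.one_le_div_iff hd₂).mpr hk)
    refine hw.2 ⟨q * d₁ + t, T.add_mem _ (T.mul_mem hd₁T q) _ ht, ?_⟩
    rw [this.1, hq, hd₁]
    ring
  · refine fun hk => ⟨0, ⟨T.zero_mem, ?_⟩, k, hk, by ring⟩
    rintro ⟨t, -, ht⟩
    omega

def gluingGens {n : ℕ} (g : Fin (n + 1) → ℕ) (d₁ d₂ : ℕ) : Fin (n + 2) → ℕ :=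
  Fin.snoc (fun i => d₂ * g i) d₁

variable {n : ℕ} {g : Fin (n + 1) → ℕ}

lemma gluingGens_injective (hg : T.MinGens g) (hd₂ : 0 < d₂) (hndvd : ¬ d₂ ∣ d₁) :
    (gluingGens g d₁ d₂).Injective :=
  Fin.snoc_injective_of_injective ((mul_right_injective₀ hd₂.ne').comp hg.1.injective)
    fun ⟨i, hi⟩ => hndvd ⟨g i, hi.symm⟩

lemma gluingGens_zero_le (hg : T.MinGens g) (hlt : d₂ * T.mult < d₁) (i : Fin (n + 2)) :
    gluingGens g d₁ d₂ 0 ≤ gluingGens g d₁ d₂ i := by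
  have h0 : gluingGens g d₁ d₂ 0 = d₂ * T.mult := by simp [gluingGens, ← hg.apply_zero]
  rw [h0]
  refine Fin.lastCases (by simpa [gluingGens] using hlt.le) (fun i => ?_) i
  simpa [gluingGens, ← hg.apply_zero] using
    Nat.mul_le_mul_left d₂ (hg.1.monotone (Fin.zero_le i))

lemma MinGens.gluing (hg : T.MinGens g) (hS : S.carrier = gluing T d₁ d₂)
    (hcop : Nat.Coprime d₁ d₂) (hd₁T : d₁ ∈ T.carrier) (hd₁gen : ¬ T.IsMinGen d₁)
    (hndvd : ¬ d₂ ∣ d₁) (hd₂ : 0 < d₂) :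
    S.MinGens (gluingGens g d₁ d₂ ∘ Tuple.sort (gluingGens g d₁ d₂)) := by
  refine ⟨(Tuple.monotone_sort _).strictMono_of_injective
    ((gluingGens_injective hg hd₂ hndvd).comp (Equiv.injective _)), ?_⟩
  rw [EquivLike.range_comp, gluingGens, Fin.range_snoc,
    setOf_isMinGen_gluing hS hcop hd₁T hd₁gen hndvd hd₂, ← hg.2, ← Set.range_comp]
  rfl

lemma alpha_gluingGens (hS : S.carrier = gluing T d₁ d₂) (hcop : Nat.Coprime d₁ d₂)
    (hd₁T : d₁ ∈ T.carrier) (hd₁Ap : d₁ ∉ T.Apery T.mult) (hd₂ : 0 < d₂)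
    (hmult : S.mult = d₂ * T.mult) :
    S.alpha (gluingGens g d₁ d₂) = Fin.snoc (T.alpha g) (d₂ - 1) := by
  funext i
  refine Fin.lastCases ?_ (fun i => ?_) i
  · simp only [alpha, gluingGens, Fin.snoc_last, hmult, setOf_mul_mem_apery_gluing_eq_Iio hS hcop
      hd₁T hd₂ T.mult_mem_and_ne_zero.2 hd₁Ap]
    rw [show Set.Iio d₂ = Set.Iic (d₂ - 1) by ext; simp; omega, csSup_Iic]
  · simp only [alpha, gluingGens, Fin.snoc_castSucc, hmult,
      setOf_mul_mem_apery_gluing_mul hS hcop hd₁T hd₂]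

lemma apery_gluing_eq_rect (hApT : T.Apery T.mult = rect g (T.alpha g))
    (hS : S.carrier = gluing T d₁ d₂) (hcop : Nat.Coprime d₁ d₂) (hd₁T : d₁ ∈ T.carrier)
    (hd₂ : 0 < d₂) (hmult : S.mult = d₂ * T.mult) :
    S.Apery S.mult = rect (gluingGens g d₁ d₂) (Fin.snoc (T.alpha g) (d₂ - 1)) := by
  rw [gluingGens, rect_snoc, rect_mul_left, ← hApT, hmult, apery_gluing hS hcop hd₁T hd₂]
  ext x
  simp only [Set.mem_ofPred_eq, Set.mem_image, exists_exists_and_eq_and]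
  constructor <;> rintro ⟨w, hw, j, hj, rfl⟩ <;> exact ⟨w, hw, j, by omega, by ring⟩

end Gluing

end NumSgp

open NumSgp

/-- If `T` has α-rectangular Apéry set and `d₁, d₂` are coprime with `d₁ ∈ T` not a
minimal generator, `d₁ ∉ Ap(T, m(T))`, `d₂ > 1` and `d₁ > d₂·m(T)`, then the gluing
`S = d₂·T + d₁·ℕ` has α-rectangular Apéry set. -/
theorem stmt_17 (T : NumSgp) (hT : T.AlphaRect) (d₁ d₂ : ℕ) (hcop : Nat.Coprime d₁ d₂)
    (hd₁T : d₁ ∈ T.carrier) (hd₁gen : ¬ T.IsMinGen d₁) (hd₁Ap : d₁ ∉ T.Apery T.mult)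
    (hd₂ : 1 < d₂) (hlt : d₂ * T.mult < d₁) (S : NumSgp)
    (hS : S.carrier = {s | ∃ t ∈ T.carrier, ∃ k : ℕ, s = d₂ * t + d₁ * k}) :
    S.AlphaRect := by
  obtain ⟨ν, g, hg, hApT⟩ := hT
  obtain ⟨n, rfl⟩ := Nat.exists_eq_add_one.mpr hg.pos
  have hd₂0 : 0 < d₂ := by omega
  have hndvd : ¬ d₂ ∣ d₁ := fun h => hd₂.ne' (hcop.symm.eq_one_of_dvd h)
  have hmult : S.mult = d₂ * T.mult := mult_gluing hS hd₂0 hlt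
  have hσ : Tuple.sort (gluingGens g d₁ d₂) 0 = 0 :=
    Tuple.sort_apply_zero_of_le (gluingGens_injective hg hd₂0 hndvd) (gluingGens_zero_le hg hlt)
  refine ⟨n + 2, _, hg.gluing hS hcop hd₁T hd₁gen hndvd hd₂0, ?_⟩
  rw [show S.alpha (gluingGens g d₁ d₂ ∘ _) = S.alpha (gluingGens g d₁ d₂) ∘ _ from rfl,
    rect_comp_perm _ _ hσ, alpha_gluingGens hS hcop hd₁T hd₁Ap hd₂0 hmult,
    apery_gluing_eq_rect hApT hS hcop hd₁T hd₂0 hmult]
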